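/- arXiv:2505.22277 — 5 statements merged into one kernel-verified Lean document; each statement's English description precedes it below -/
import Mathlib

section
/- Let φ and χ be HML formulas and p a process such that χ is characteristic for p modulo HML-equivalence (that is, for every process q: q ⊨ χ iff p and q satisfy exactly the same HML formulas), and suppose p ⊨ φ. Then φ is valid if and only if neg(φ) ∨ χ is characteristic for some process modulo HML-equivalence, where neg denotes negation-normal-form negation (swapping tt with ff, ∧ with ∨, and ⟨a⟩ with [a]). -/
/-- Finite, loop-free CCS processes over the action set `Act`:
`p ::= 0 | a.p | p + p`. -/
inductive Proc (Act : Type) : Type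
  | nil : Proc Act
  | pre : Act → Proc Act → Proc Act
  | plus : Proc Act → Proc Act → Proc Act

/-- The transition relation: `a.p —a→ p`, and `p₁ + p₂ —a→ p'` iff
`p₁ —a→ p'` or `p₂ —a→ p'`. -/
inductive Step {Act : Type} : Proc Act → Act → Proc Act → Prop
  | pre (a : Act) (p : Proc Act) : Step (Proc.pre a p) a p
  | plusL : ∀ {p₁ p₂ p' : Proc Act} {a : Act},
      Step p₁ a p' → Step (Proc.plus p₁ p₂) a p'
  | plusR : ∀ {p₁ p₂ p' : Proc Act} {a : Act},
      Step p₂ a p' → Step (Proc.plus p₁ p₂) a p'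

/-- HML formulas in negation normal form:
`φ ::= tt | ff | φ∧φ | φ∨φ | ⟨a⟩φ | [a]φ`. -/
inductive HML (Act : Type) : Type
  | tt : HML Act
  | ff : HML Act
  | conj : HML Act → HML Act → HML Act
  | disj : HML Act → HML Act → HML Act
  | dia : Act → HML Act → HML Act
  | box : Act → HML Act → HML Act

/-- The satisfaction relation `p ⊨ φ`. -/
def Sat {Act : Type} : Proc Act → HML Act → Prop
  | _, HML.tt => True
  | _, HML.ff => False
  | p, HML.conj φ ψ => Sat p φ ∧ Sat p ψ
  | p, HML.disj φ ψ => Sat p φ ∨ Sat p ψ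
  | p, HML.dia a φ => ∃ p', Step p a p' ∧ Sat p' φ
  | p, HML.box a φ => ∀ p', Step p a p' → Sat p' φ

/-- `φ` entails `ψ` iff every process satisfying `φ` satisfies `ψ`. -/
def Entails {Act : Type} (φ ψ : HML Act) : Prop :=
  ∀ p : Proc Act, Sat p φ → Sat p ψ

/-- `R` is a simulation relation. -/
def IsSimulation {Act : Type} (R : Proc Act → Proc Act → Prop) : Prop :=
  ∀ p q, R p q → ∀ a p', Step p a p' → ∃ q', Step q a q' ∧ R p' q'

/-- The simulation preorder `≲_S`: the largest simulation. -/
def Sim {Act : Type} (p q : Proc Act) : Prop :=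
  ∃ R, IsSimulation R ∧ R p q

/-- The set `I(p)` of initial actions of a process. -/
def initials {Act : Type} (p : Proc Act) : Set Act :=
  {a | ∃ p', Step p a p'}

/-- Negation-normal-form negation. -/
def hmlNeg {Act : Type} : HML Act → HML Act
  | HML.tt => HML.ff
  | HML.ff => HML.tt
  | HML.conj φ ψ => HML.disj (hmlNeg φ) (hmlNeg ψ)
  | HML.disj φ ψ => HML.conj (hmlNeg φ) (hmlNeg ψ)
  | HML.dia a φ => HML.box a (hmlNeg φ)
  | HML.box a φ => HML.dia a (hmlNeg φ)

/-!
If `φ` is valid then `neg(φ) ∨ χ` is equivalent to `χ`, hence characteristic for `p`.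
Conversely, if `neg(φ) ∨ χ` is characteristic for some `r`, then `p` (through `χ`) and every
`q ⊭ φ` (through `neg(φ)`) satisfy it, so they are HML-equivalent to `r` and hence to each other;
since `p ⊨ φ`, no such `q` exists.
-/

variable {Act : Type}

theorem sat_hmlNeg (φ : HML Act) (q : Proc Act) : Sat q (hmlNeg φ) ↔ ¬ Sat q φ := by
  induction φ generalizing q <;> simp_all [Sat, hmlNeg, imp_iff_not_or]

def HMLEquiv (p q : Proc Act) : Prop :=
  ∀ ψ : HML Act, Sat p ψ ↔ Sat q ψ

def IsCharacteristic (χ : HML Act) (p : Proc Act) : Prop :=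
  ∀ q : Proc Act, Sat q χ ↔ HMLEquiv p q

namespace IsCharacteristic

variable {χ : HML Act} {p : Proc Act}

theorem sat_self (h : IsCharacteristic χ p) : Sat p χ :=
  (h p).2 fun _ => Iff.rfl

theorem hmlEquiv_of_sat (h : IsCharacteristic χ p) {q₁ q₂ : Proc Act}
    (h₁ : Sat q₁ χ) (h₂ : Sat q₂ χ) : HMLEquiv q₁ q₂ :=
  fun ψ => ((h q₁).1 h₁ ψ).symm.trans ((h q₂).1 h₂ ψ)

theorem congr {χ' : HML Act} (h : IsCharacteristic χ p) (hχ : ∀ q, Sat q χ' ↔ Sat q χ) :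
    IsCharacteristic χ' p :=
  fun q => (hχ q).trans (h q)

end IsCharacteristic

theorem valid_iff_negOrChar_characteristic_general {Act : Type}
    (φ χ : HML Act) (p : Proc Act)
    (hchar : ∀ q : Proc Act, Sat q χ ↔ (∀ ψ : HML Act, Sat p ψ ↔ Sat q ψ))
    (hp : Sat p φ) :
    (∀ q : Proc Act, Sat q φ) ↔
      (∃ r : Proc Act, ∀ q : Proc Act,
        Sat q (HML.disj (hmlNeg φ) χ) ↔ (∀ ψ : HML Act, Sat r ψ ↔ Sat q ψ)) := by
  have hχ : IsCharacteristic χ p := hchar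
  constructor
  · intro hvalid
    exact ⟨p, hχ.congr fun q => by simp [Sat, sat_hmlNeg, hvalid q]⟩
  · rintro ⟨r, hr⟩ q
    have hr : IsCharacteristic (HML.disj (hmlNeg φ) χ) r := hr
    by_contra hq
    have hpq : HMLEquiv p q :=
      hr.hmlEquiv_of_sat (Or.inr hχ.sat_self) (Or.inl ((sat_hmlNeg φ q).2 hq))
    exact hq ((hpq φ).1 hp)

/-- Suppose `χ` is characteristic for the process `p` modulo HML-equivalence
(i.e. `q ⊨ χ` iff `p` and `q` satisfy the same HML formulas) and `p ⊨ φ`.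
Then `φ` is valid iff `neg(φ) ∨ χ` is characteristic for some process
modulo HML-equivalence. -/
theorem valid_iff_negOrChar_characteristic {Act : Type} [Fintype Act] [Nonempty Act]
    (φ χ : HML Act) (p : Proc Act)
    (hchar : ∀ q : Proc Act, Sat q χ ↔ (∀ ψ : HML Act, Sat p ψ ↔ Sat q ψ))
    (hp : Sat p φ) :
    (∀ q : Proc Act, Sat q φ) ↔
      (∃ r : Proc Act, ∀ q : Proc Act,
        Sat q (HML.disj (hmlNeg φ) χ) ↔ (∀ ψ : HML Act, Sat r ψ ↔ Sat q ψ)) :=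
  valid_iff_negOrChar_characteristic_general φ χ p hchar hp
end

section
/- For all formulas φ1, φ2, ψ ∈ L_S and every action a ∈ Act: φ1∧φ2 entails ⟨a⟩ψ if and only if φ1 entails ⟨a⟩ψ or φ2 entails ⟨a⟩ψ. -/
/-- The fragment `L_S`: `φ ::= tt | ff | φ∧φ | φ∨φ | ⟨a⟩φ`. -/
inductive InLS {Act : Type} : HML Act → Prop
  | tt : InLS HML.tt
  | ff : InLS HML.ff
  | conj : ∀ {φ ψ : HML Act}, InLS φ → InLS ψ → InLS (HML.conj φ ψ)
  | disj : ∀ {φ ψ : HML Act}, InLS φ → InLS ψ → InLS (HML.disj φ ψ)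
  | dia : ∀ {a : Act} {φ : HML Act}, InLS φ → InLS (HML.dia a φ)

/-!
Formulas of `L_S` only assert the existence of transitions, so they are preserved when a
process gains transitions. Hence if `p₁ ⊨ φ₁` and `p₂ ⊨ φ₂` refute `φ₁ ⊨ ⟨a⟩ψ` and
`φ₂ ⊨ ⟨a⟩ψ`, the sum `p₁ + p₂` satisfies `φ₁ ∧ φ₂`, while its `a`-steps are those of
`p₁` and `p₂`, none of which leads to `ψ`.
-/

theorem Step.plus_iff {Act : Type} {p q p' : Proc Act} {a : Act} :
    Step (Proc.plus p q) a p' ↔ Step p a p' ∨ Step q a p' := by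
  constructor
  · rintro (_ | ⟨h⟩ | ⟨h⟩)
    exacts [Or.inl h, Or.inr h]
  · rintro (h | h)
    exacts [Step.plusL h, Step.plusR h]

theorem Sat.dia_plus_iff {Act : Type} {p q : Proc Act} {a : Act} {ψ : HML Act} :
    Sat (Proc.plus p q) (HML.dia a ψ) ↔ Sat p (HML.dia a ψ) ∨ Sat q (HML.dia a ψ) := by
  simp only [Sat, Step.plus_iff, or_and_right, exists_or]

theorem InLS.sat_of_steps_subset {Act : Type} {φ : HML Act} (hφ : InLS φ)
    {p q : Proc Act} (hpq : ∀ a p', Step p a p' → Step q a p') (hp : Sat p φ) :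
    Sat q φ := by
  induction hφ with
  | tt => trivial
  | ff => exact hp
  | conj _ _ ih₁ ih₂ => exact ⟨ih₁ hp.1, ih₂ hp.2⟩
  | disj _ _ ih₁ ih₂ => exact hp.imp ih₁ ih₂
  | dia _ _ =>
    obtain ⟨p', hstep, hp'⟩ := hp
    exact ⟨p', hpq _ _ hstep, hp'⟩

theorem InLS.sat_plus_left {Act : Type} {φ : HML Act} (hφ : InLS φ) {p : Proc Act}
    (q : Proc Act) (hp : Sat p φ) : Sat (Proc.plus p q) φ :=
  hφ.sat_of_steps_subset (fun _ _ => Step.plusL) hp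

theorem InLS.sat_plus_right {Act : Type} {φ : HML Act} (hφ : InLS φ) (p : Proc Act)
    {q : Proc Act} (hq : Sat q φ) : Sat (Proc.plus p q) φ :=
  hφ.sat_of_steps_subset (fun _ _ => Step.plusR) hq

theorem conj_entails_dia_iff_general {Act : Type}
    (φ₁ φ₂ ψ : HML Act) (a : Act)
    (h₁ : InLS φ₁) (h₂ : InLS φ₂) :
    Entails (HML.conj φ₁ φ₂) (HML.dia a ψ) ↔
      (Entails φ₁ (HML.dia a ψ) ∨ Entails φ₂ (HML.dia a ψ)) := by
  refine ⟨fun h => ?_, ?_⟩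
  · by_contra hc
    simp only [Entails, not_or, not_forall, exists_prop] at hc
    obtain ⟨⟨p₁, hp₁, hd₁⟩, ⟨p₂, hp₂, hd₂⟩⟩ := hc
    have hsum := h (Proc.plus p₁ p₂) ⟨h₁.sat_plus_left p₂ hp₁, h₂.sat_plus_right p₁ hp₂⟩
    exact (Sat.dia_plus_iff.mp hsum).elim hd₁ hd₂
  · rintro (h | h) p hp
    exacts [h p hp.1, h p hp.2]

/-- For all `φ₁, φ₂, ψ ∈ L_S` and every action `a`: `φ₁∧φ₂` entails `⟨a⟩ψ`
iff `φ₁` entails `⟨a⟩ψ` or `φ₂` entails `⟨a⟩ψ`. -/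
theorem conj_entails_dia_iff {Act : Type} [Fintype Act] [Nonempty Act]
    (φ₁ φ₂ ψ : HML Act) (a : Act)
    (h₁ : InLS φ₁) (h₂ : InLS φ₂) (hψ : InLS ψ) :
    Entails (HML.conj φ₁ φ₂) (HML.dia a ψ) ↔
      (Entails φ₁ (HML.dia a ψ) ∨ Entails φ₂ (HML.dia a ψ)) :=
  conj_entails_dia_iff_general φ₁ φ₂ ψ a h₁ h₂
end

section
/- Let φ be a formula generated by the grammar φ ::= tt | ⟨a⟩φ | φ∧φ. Then for every process q: q ⊨ φ if and only if p_φ ≲_S q; consequently, φ is prime in L_S. -/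
/-- Formulas generated by the grammar `φ ::= tt | ⟨a⟩φ | φ∧φ`. -/
inductive InConj {Act : Type} : HML Act → Prop
  | tt : InConj HML.tt
  | dia : ∀ {a : Act} {φ : HML Act}, InConj φ → InConj (HML.dia a φ)
  | conj : ∀ {φ ψ : HML Act}, InConj φ → InConj ψ → InConj (HML.conj φ ψ)

/-- The process `p_φ` associated with a formula generated by
`φ ::= tt | ⟨a⟩φ | φ∧φ`: `p_tt = 0`, `p_{⟨a⟩φ'} = a.p_{φ'}`,
`p_{φ₁∧φ₂} = p_{φ₁} + p_{φ₂}`. -/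
def charProc {Act : Type} : HML Act → Proc Act
  | HML.dia a φ => Proc.pre a (charProc φ)
  | HML.conj φ ψ => Proc.plus (charProc φ) (charProc ψ)
  | _ => Proc.nil

/-- `φ` is prime in the fragment `L`: whenever `φ` entails a disjunction of
`L`-formulas, it entails one of the disjuncts. -/
def PrimeIn {Act : Type} (L : HML Act → Prop) (φ : HML Act) : Prop :=
  ∀ φ₁ φ₂ : HML Act, L φ₁ → L φ₂ → Entails φ (HML.disj φ₁ φ₂) →
    Entails φ φ₁ ∨ Entails φ φ₂

/-!
Each transition of `p_φ` comes from a diamond `⟨a⟩ψ` of `φ` and leads to `p_ψ`, so in any model `q`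
of `φ` it can be matched by the step witnessing `⟨a⟩ψ`; this makes `p_φ` a least model of `φ` for
`≲_S`. Formulas of `L_S` are preserved along `≲_S`, so if `φ ⊨ φ₁ ∨ φ₂` then `p_φ` satisfies one
disjunct, and hence so does every model of `φ`.
-/

section

variable {Act : Type}

theorem InConj.inLS {φ : HML Act} (h : InConj φ) : InLS φ := by
  induction h with
  | tt => exact InLS.tt
  | dia _ ih => exact InLS.dia ih
  | conj _ _ ih₁ ih₂ => exact InLS.conj ih₁ ih₂

theorem sim_of_forall_step {p q : Proc Act} (h : ∀ a p', Step p a p' → Step q a p') :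
    Sim p q := by
  refine ⟨fun x y => x = y ∨ (x = p ∧ y = q), ?_, Or.inr ⟨rfl, rfl⟩⟩
  rintro x y (rfl | ⟨rfl, rfl⟩) a x' hx
  · exact ⟨x', hx, Or.inl rfl⟩
  · exact ⟨x', h a x' hx, Or.inl rfl⟩

theorem sim_plus_left (p r : Proc Act) : Sim p (Proc.plus p r) :=
  sim_of_forall_step fun _ _ => Step.plusL

theorem sim_plus_right (p r : Proc Act) : Sim r (Proc.plus p r) :=
  sim_of_forall_step fun _ _ => Step.plusR

theorem InLS.sat_of_sim {ψ : HML Act} (hψ : InLS ψ) {p q : Proc Act} (hpq : Sim p q)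
    (hp : Sat p ψ) : Sat q ψ := by
  induction hψ generalizing p q with
  | tt => trivial
  | ff => exact hp.elim
  | conj _ _ ih₁ ih₂ => exact ⟨ih₁ hpq hp.1, ih₂ hpq hp.2⟩
  | disj _ _ ih₁ ih₂ => exact hp.imp (ih₁ hpq) (ih₂ hpq)
  | dia _ ih =>
    obtain ⟨p', hstep, hp'⟩ := hp
    obtain ⟨R, hR, hRpq⟩ := hpq
    obtain ⟨q', hqstep, hRpq'⟩ := hR p q hRpq _ p' hstep
    exact ⟨q', hqstep, ih ⟨R, hR, hRpq'⟩ hp'⟩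

theorem sat_charProc {φ : HML Act} (h : InConj φ) : Sat (charProc φ) φ := by
  induction h with
  | tt => trivial
  | dia _ ih => exact ⟨_, Step.pre _ _, ih⟩
  | conj h₁ h₂ ih₁ ih₂ =>
    exact ⟨h₁.inLS.sat_of_sim (sim_plus_left _ _) ih₁,
      h₂.inLS.sat_of_sim (sim_plus_right _ _) ih₂⟩

theorem exists_step_of_step_charProc {φ : HML Act} (h : InConj φ) {a : Act} {p' q : Proc Act}
    (hstep : Step (charProc φ) a p') (hq : Sat q φ) :
    ∃ ψ, InConj ψ ∧ p' = charProc ψ ∧ ∃ q', Step q a q' ∧ Sat q' ψ := by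
  induction h generalizing p' with
  | tt => cases hstep
  | dia hψ =>
    cases hstep
    exact ⟨_, hψ, rfl, hq⟩
  | conj _ _ ih₁ ih₂ =>
    cases hstep with
    | plusL hstep => exact ih₁ hstep hq.1
    | plusR hstep => exact ih₂ hstep hq.2

theorem sim_charProc_of_sat {φ : HML Act} (h : InConj φ) {q : Proc Act} (hq : Sat q φ) :
    Sim (charProc φ) q := by
  refine ⟨fun p q => ∃ ψ, InConj ψ ∧ p = charProc ψ ∧ Sat q ψ, ?_, φ, h, rfl, hq⟩
  rintro p q ⟨ψ, hψ, rfl, hqψ⟩ a p' hstep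
  obtain ⟨ψ', hψ', rfl, q', hqstep, hq'⟩ := exists_step_of_step_charProc hψ hstep hqψ
  exact ⟨q', hqstep, ψ', hψ', rfl, hq'⟩

theorem sat_iff_sim_charProc {φ : HML Act} (h : InConj φ) (q : Proc Act) :
    Sat q φ ↔ Sim (charProc φ) q :=
  ⟨sim_charProc_of_sat h, fun hsim => h.inLS.sat_of_sim hsim (sat_charProc h)⟩

theorem primeIn_inLS_of_isLeast_model {φ : HML Act} {p : Proc Act} (hp : Sat p φ)
    (hleast : ∀ q, Sat q φ → Sim p q) : PrimeIn InLS φ := by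
  intro φ₁ φ₂ h₁ h₂ hφ
  exact (hφ p hp).imp (fun hp₁ q hq => h₁.sat_of_sim (hleast q hq) hp₁)
    (fun hp₂ q hq => h₂.sat_of_sim (hleast q hq) hp₂)

end

theorem conjFormula_characteristic_and_prime_general {Act : Type}
    (φ : HML Act) (h : InConj φ) :
    (∀ q : Proc Act, Sat q φ ↔ Sim (charProc φ) q) ∧ PrimeIn InLS φ :=
  ⟨sat_iff_sim_charProc h,
    primeIn_inLS_of_isLeast_model (sat_charProc h) fun _ => sim_charProc_of_sat h⟩

/-- Let `φ` be generated by `φ ::= tt | ⟨a⟩φ | φ∧φ`. Then for every process `q`,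
`q ⊨ φ` iff `p_φ ≲_S q`; consequently `φ` is prime in `L_S`. -/
theorem conjFormula_characteristic_and_prime {Act : Type} [Fintype Act] [Nonempty Act]
    (φ : HML Act) (h : InConj φ) :
    (∀ q : Proc Act, Sat q φ ↔ Sim (charProc φ) q) ∧ PrimeIn InLS φ :=
  conjFormula_characteristic_and_prime_general φ h
end

section
/- Let p and q be processes with p ≡_S q. Then: (a) I(p) = I(q), and for every a ∈ I(p) there exist transitions p —a→ p* and q —a→ q* with p* ≡_S q*; (b) for every transition p —a→ p', either there is a transition q —a→ q' with p' ≡_S q', or there exist transitions p —a→ p* and q —a→ q* such that p* ≡_S q* and p' ≲_S p*. -/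
/-!
Every `a`-derivative `p'` of `p` lies below an `a`-derivative `p*` that is `≲_S`-maximal among
the finitely many `a`-derivatives of `p`. Simulating `p*` by some `q —a→ q*` and `q*` back by some
`p —a→ p**` gives `p* ≲_S q* ≲_S p**`, so maximality forces `p** ≲_S p*` and hence `p* ≡_S q*`.
-/

section

variable {Act : Type}

theorem isSimulation_sim : IsSimulation (Sim : Proc Act → Proc Act → Prop) := by
  rintro p q ⟨R, hR, hpq⟩ a p' hs
  obtain ⟨q', hq', hR'⟩ := hR p q hpq a p' hs
  exact ⟨q', hq', R, hR, hR'⟩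

theorem Sim.exists_step {p q p' : Proc Act} {a : Act} (h : Sim p q) (hs : Step p a p') :
    ∃ q', Step q a q' ∧ Sim p' q' :=
  isSimulation_sim p q h a p' hs

theorem Sim.refl (p : Proc Act) : Sim p p :=
  ⟨Eq, fun _ _ h _ p' hs => ⟨p', h ▸ hs, rfl⟩, rfl⟩

theorem Sim.trans {p q r : Proc Act} (hpq : Sim p q) (hqr : Sim q r) : Sim p r :=
  ⟨fun x z => ∃ y, Sim x y ∧ Sim y z, fun _ _ ⟨_, hxy, hyz⟩ _ _ hs =>
    let ⟨y', hy', hxy'⟩ := hxy.exists_step hs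
    let ⟨z', hz', hyz'⟩ := hyz.exists_step hy'
    ⟨z', hz', y', hxy', hyz'⟩, q, hpq, hqr⟩

instance : Preorder (Proc Act) where
  le := Sim
  le_refl := Sim.refl
  le_trans _ _ _ := Sim.trans

theorem initials_subset_of_sim {p q : Proc Act} (h : Sim p q) : initials p ⊆ initials q :=
  fun _ ⟨_, hs⟩ => (h.exists_step hs).imp fun _ => And.left

theorem finite_derivatives (p : Proc Act) (a : Act) : {p' | Step p a p'}.Finite := by
  induction p with
  | nil => exact Set.finite_empty.subset (by rintro _ ⟨⟩)
  | pre b p => exact (Set.finite_singleton p).subset (by rintro _ ⟨⟩; rfl)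
  | plus p₁ p₂ ih₁ ih₂ =>
    refine (ih₁.union ih₂).subset ?_
    rintro _ (_ | ⟨h⟩ | ⟨h⟩)
    exacts [Or.inl h, Or.inr h]

theorem exists_step_simEquiv_above {p q p' : Proc Act} {a : Act} (hpq : Sim p q) (hqp : Sim q p)
    (hs : Step p a p') :
    ∃ pstar qstar, Step p a pstar ∧ Step q a qstar ∧ (Sim pstar qstar ∧ Sim qstar pstar) ∧
      Sim p' pstar := by
  obtain ⟨pstar, hle, hmax⟩ := (finite_derivatives p a).exists_le_maximal hs
  obtain ⟨qstar, hq, hpq'⟩ := hpq.exists_step hmax.prop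
  obtain ⟨pstar', hp', hqp'⟩ := hqp.exists_step hq
  have hback : Sim pstar' pstar := hmax.2 hp' (hpq'.trans hqp')
  exact ⟨pstar, qstar, hmax.prop, hq, ⟨hpq', hqp'.trans hback⟩, hle⟩

end

theorem simEquiv_transfer_general {Act : Type}
    (p q : Proc Act) (h : Sim p q ∧ Sim q p) :
    (initials p = initials q ∧
      ∀ a ∈ initials p, ∃ pstar qstar : Proc Act,
        Step p a pstar ∧ Step q a qstar ∧ (Sim pstar qstar ∧ Sim qstar pstar)) ∧
    (∀ (a : Act) (p' : Proc Act), Step p a p' →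
      (∃ q' : Proc Act, Step q a q' ∧ (Sim p' q' ∧ Sim q' p')) ∨
      (∃ pstar qstar : Proc Act, Step p a pstar ∧ Step q a qstar ∧
        (Sim pstar qstar ∧ Sim qstar pstar) ∧ Sim p' pstar)) := by
  obtain ⟨hpq, hqp⟩ := h
  refine ⟨⟨(initials_subset_of_sim hpq).antisymm (initials_subset_of_sim hqp), ?_⟩,
    fun a p' hs => Or.inr (exists_step_simEquiv_above hpq hqp hs)⟩
  rintro a ⟨p', hs⟩
  obtain ⟨pstar, qstar, hp, hq, hequiv, -⟩ := exists_step_simEquiv_above hpq hqp hs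
  exact ⟨pstar, qstar, hp, hq, hequiv⟩

/-- Let `p ≡_S q`. Then: (a) `I(p) = I(q)`, and for every `a ∈ I(p)` there are
`p —a→ p*` and `q —a→ q*` with `p* ≡_S q*`; (b) for every `p —a→ p'`, either
there is `q —a→ q'` with `p' ≡_S q'`, or there are `p —a→ p*` and `q —a→ q*`
with `p* ≡_S q*` and `p' ≲_S p*`. -/
theorem simEquiv_transfer {Act : Type} [Fintype Act] [Nonempty Act]
    (p q : Proc Act) (h : Sim p q ∧ Sim q p) :
    (initials p = initials q ∧
      ∀ a ∈ initials p, ∃ pstar qstar : Proc Act,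
        Step p a pstar ∧ Step q a qstar ∧ (Sim pstar qstar ∧ Sim qstar pstar)) ∧
    (∀ (a : Act) (p' : Proc Act), Step p a p' →
      (∃ q' : Proc Act, Step q a q' ∧ (Sim p' q' ∧ Sim q' p')) ∨
      (∃ pstar qstar : Proc Act, Step p a pstar ∧ Step q a qstar ∧
        (Sim pstar qstar ∧ Sim qstar pstar) ∧ Sim p' pstar)) :=
  simEquiv_transfer_general p q h
end

section
/- A formula φ ∈ L_CS is characteristic for some process with respect to complete simulation equivalence (that is, there is a process p such that for every process q, q ⊨ φ iff p ≡_CS q) if and only if φ is logically equivalent to ⋀_{a∈Act}[a]ff. -/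
/-- The formula `𝟬 = ⋀_{a ∈ Act} [a]ff`. -/
noncomputable def ZeroF (Act : Type) [Fintype Act] : HML Act :=
  ((Finset.univ : Finset Act).toList.map (fun a => HML.box a HML.ff)).foldr HML.conj HML.tt

/-- The fragment `L_CS`: `φ ::= tt | ff | φ∧φ | φ∨φ | ⟨a⟩φ | 𝟬`,
where `𝟬 = ⋀_{a ∈ Act} [a]ff`. -/
inductive InLCS {Act : Type} [Fintype Act] : HML Act → Prop
  | tt : InLCS HML.tt
  | ff : InLCS HML.ff
  | conj : ∀ {φ ψ : HML Act}, InLCS φ → InLCS ψ → InLCS (HML.conj φ ψ)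
  | disj : ∀ {φ ψ : HML Act}, InLCS φ → InLCS ψ → InLCS (HML.disj φ ψ)
  | dia : ∀ {a : Act} {φ : HML Act}, InLCS φ → InLCS (HML.dia a φ)
  | zero : InLCS (ZeroF Act)

/-- `R` is a complete simulation. -/
def IsCSim {Act : Type} (R : Proc Act → Proc Act → Prop) : Prop :=
  ∀ p q, R p q →
    (∀ a p', Step p a p' → ∃ q', Step q a q' ∧ R p' q') ∧
    (initials p = ∅ ↔ initials q = ∅)

/-- The complete simulation preorder `≲_CS`: the largest complete simulation. -/
def CSim {Act : Type} (p q : Proc Act) : Prop :=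
  ∃ R, IsCSim R ∧ R p q

/-!
If `φ ∈ L_CS` is characteristic for a deadlocked process, it holds exactly of the deadlocked
processes, i.e. `φ ≡ 𝟬`. It cannot be characteristic for a process `p` with a transition
`p —a→ p'`: formulas of `L_CS` are preserved upwards along `≲_CS`, and `p ≲_CS p + a.p`, so
`p + a.p ⊨ φ`; but `p + a.p ≲_CS p` would require `p ≲_S p''` for some `p —a→ p''`, and no
finite process is simulated by one of its own derivatives.
-/

section

variable {Act : Type}

theorem sizeOf_lt_of_step {p p' : Proc Act} {a : Act} (h : Step p a p') :
    sizeOf p' < sizeOf p := by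
  induction h with
  | pre => simp
  | plusL _ ih => simp only [Proc.plus.sizeOf_spec]; omega
  | plusR _ ih => simp only [Proc.plus.sizeOf_spec]; omega

theorem not_sim_of_step {p p' : Proc Act} {a : Act} (h : Step p a p') : ¬ Sim p p' := by
  rintro ⟨R, hR, hpp'⟩
  obtain ⟨p'', h', hR'⟩ := hR p p' hpp' a p' h
  exact not_sim_of_step h' ⟨R, hR, hR'⟩
termination_by sizeOf p
decreasing_by exact sizeOf_lt_of_step h

theorem initials_nil : initials (Proc.nil : Proc Act) = ∅ :=
  Set.eq_empty_iff_forall_notMem.mpr fun _ ⟨_, h⟩ => nomatch h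

theorem initials_ne_empty_of_step {p p' : Proc Act} {a : Act} (h : Step p a p') :
    initials p ≠ ∅ :=
  Set.nonempty_iff_ne_empty.mp ⟨a, p', h⟩

theorem sat_foldr_conj (p : Proc Act) (l : List (HML Act)) :
    Sat p (l.foldr HML.conj HML.tt) ↔ ∀ ψ ∈ l, Sat p ψ := by
  induction l with
  | nil => simp [Sat]
  | cons ψ l ih => simp [Sat, ih]

theorem sat_zeroF_iff [Fintype Act] (p : Proc Act) : Sat p (ZeroF Act) ↔ initials p = ∅ := by
  simp [ZeroF, sat_foldr_conj, Sat, initials, Set.eq_empty_iff_forall_notMem]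

namespace CSim

theorem sim {p q : Proc Act} (h : CSim p q) : Sim p q :=
  let ⟨R, hR, hpq⟩ := h
  ⟨R, fun x y hxy => (hR x y hxy).1, hpq⟩

theorem refl (p : Proc Act) : CSim p p :=
  ⟨Eq, by rintro x _ rfl; exact ⟨fun a x' hs => ⟨x', hs, rfl⟩, Iff.rfl⟩, rfl⟩

theorem exists_step {p q p' : Proc Act} {a : Act} (h : CSim p q) (hs : Step p a p') :
    ∃ q', Step q a q' ∧ CSim p' q' :=
  let ⟨R, hR, hpq⟩ := h
  let ⟨q', hq, hR'⟩ := (hR p q hpq).1 a p' hs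
  ⟨q', hq, R, hR, hR'⟩

theorem initials_eq_empty_iff {p q : Proc Act} (h : CSim p q) :
    initials p = ∅ ↔ initials q = ∅ :=
  let ⟨_, hR, hpq⟩ := h
  (hR p q hpq).2

theorem of_initials_eq_empty {p q : Proc Act} (hp : initials p = ∅) (hq : initials q = ∅) :
    CSim p q := by
  refine ⟨fun x y => initials x = ∅ ∧ initials y = ∅, ?_, hp, hq⟩
  rintro x y ⟨hx, hy⟩
  refine ⟨fun a x' hs => ?_, by rw [hx, hy]⟩
  exact absurd hx (initials_ne_empty_of_step hs)

theorem plus_left {p : Proc Act} (hp : initials p ≠ ∅) (r : Proc Act) :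
    CSim p (Proc.plus p r) := by
  refine ⟨fun x y => x = y ∨ x = p ∧ y = Proc.plus p r, ?_, Or.inr ⟨rfl, rfl⟩⟩
  rintro x y (rfl | ⟨rfl, rfl⟩)
  · exact ⟨fun a x' hs => ⟨x', hs, Or.inl rfl⟩, Iff.rfl⟩
  · refine ⟨fun a x' hs => ⟨x', Step.plusL hs, Or.inl rfl⟩, ?_⟩
    obtain ⟨a, x', hs⟩ := Set.nonempty_iff_ne_empty.mpr hp
    exact iff_of_false hp (initials_ne_empty_of_step (Step.plusL hs))

theorem equiv_iff_of_initials_eq_empty {p q : Proc Act} (hp : initials p = ∅) :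
    CSim p q ∧ CSim q p ↔ initials q = ∅ :=
  ⟨fun h => h.1.initials_eq_empty_iff.mp hp,
    fun hq => ⟨of_initials_eq_empty hp hq, of_initials_eq_empty hq hp⟩⟩

end CSim

theorem InLCS.sat_of_csim [Fintype Act] {φ : HML Act} (hφ : InLCS φ) :
    ∀ {p q : Proc Act}, CSim p q → Sat p φ → Sat q φ := by
  induction hφ with
  | tt => exact fun _ _ => trivial
  | ff => exact fun _ hp => hp
  | conj _ _ ih₁ ih₂ => exact fun hpq hp => ⟨ih₁ hpq hp.1, ih₂ hpq hp.2⟩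
  | disj _ _ ih₁ ih₂ => exact fun hpq hp => hp.imp (ih₁ hpq) (ih₂ hpq)
  | dia _ ih =>
    rintro p q hpq ⟨p', hs, hp'⟩
    obtain ⟨q', hq, hpq'⟩ := hpq.exists_step hs
    exact ⟨q', hq, ih hpq' hp'⟩
  | zero =>
    intro p q hpq
    simp only [sat_zeroF_iff]
    exact hpq.initials_eq_empty_iff.mp

end

theorem LCS_characteristic_mod_csEquiv_iff_general {Act : Type} [Fintype Act]
    (φ : HML Act) (h : InLCS φ) :
    (∃ p : Proc Act, ∀ q : Proc Act, Sat q φ ↔ (CSim p q ∧ CSim q p)) ↔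
      (∀ p : Proc Act, Sat p φ ↔ Sat p (ZeroF Act)) := by
  constructor
  · rintro ⟨p, hp⟩ q
    rw [sat_zeroF_iff, hp q]
    by_cases hp0 : initials p = ∅
    · exact CSim.equiv_iff_of_initials_eq_empty hp0
    obtain ⟨a, -⟩ := Set.nonempty_iff_ne_empty.mpr hp0
    have hpφ : Sat p φ := (hp p).mpr ⟨CSim.refl p, CSim.refl p⟩
    have hbig : CSim (Proc.plus p (Proc.pre a p)) p :=
      ((hp _).mp (h.sat_of_csim (CSim.plus_left hp0 _) hpφ)).2
    obtain ⟨p'', hs', hpp''⟩ := hbig.exists_step (Step.plusR (Step.pre a p))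
    exact absurd hpp''.sim (not_sim_of_step hs')
  · intro hφ
    refine ⟨Proc.nil, fun q => ?_⟩
    rw [hφ q, sat_zeroF_iff]
    exact (CSim.equiv_iff_of_initials_eq_empty initials_nil).symm

/-- A formula `φ ∈ L_CS` is characteristic for some process with respect to
complete simulation equivalence iff `φ` is logically equivalent to
`⋀_{a∈Act}[a]ff`. -/
theorem LCS_characteristic_mod_csEquiv_iff {Act : Type} [Fintype Act] [Nonempty Act]
    (φ : HML Act) (h : InLCS φ) :
    (∃ p : Proc Act, ∀ q : Proc Act, Sat q φ ↔ (CSim p q ∧ CSim q p)) ↔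
      (∀ p : Proc Act, Sat p φ ↔ Sat p (ZeroF Act)) :=
  LCS_characteristic_mod_csEquiv_iff_general φ h
end
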